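/- arXiv:2605.21920 — 2 statements merged into one kernel-verified Lean document; each statement's English description precedes it below -/
import Mathlib

section
/- For any finite graph G with vertex cover number tau(G) >= 2, every cost-minimizing ordering of V(G) (for the minimum sum vertex cover objective) has effective first coverage r_sigma(1) <= tau(G) after iteratively removing leading vertices lying in a fixed minimum vertex cover; consequently, the resulting subgraph has at most tau(G)^2 edges, and tauplus(G) <= 2 * tau(G) * log2(tau(G)). -/
/-!
Write `U i` for the number of edges not hit by the first `i` vertices and `R i` for the cost
still to be paid after position `i`, so that `R i = R (i + 1) + U i`. Moving the vertices of
the cover `S` that come after position `i` right behind it, once in the order of `σ` and once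
reversed, hits every uncovered edge at average position at most `i + (τ + 1) / 2`; optimality
of `σ` then gives `2 R i ≤ (τ + 1) U i`, so `R` decays at least by the factor
`(τ - 1) / (τ + 1)` per position. An exchange of adjacent positions shows that the coverage
of positions is nonincreasing, and a vertex `w ∉ S` covers at most `τ` edges, all its
neighbours being in `S`. So from position `σ w` on at most `τ` edges are covered per step,
which forces `U (σ w - 1) ≤ τ²`; the decay of `R` from at most `(τ + 1) τ² / 2` to `1` then
bounds the last position at which an edge is first hit. If no vertex outside `S` occurs among
the first `τ` positions, these positions are `S` itself and every edge is hit by position `τ`.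
-/

open Finset

/-- Position at which hyperedge `e` is first hit by the ordering `σ`. -/
noncomputable def firstHit {α : Type*} (σ : α → ℕ) (e : Finset α) : ℕ :=
  sInf (σ '' ↑e)

/-- Total cost of an ordering: each edge pays the position of its first vertex. -/
noncomputable def totalCost {α : Type*} (E : Finset (Finset α)) (σ : α → ℕ) : ℕ :=
  ∑ e ∈ E, firstHit σ e

open scoped Classical in
/-- Effective coverage of position `i`: the number of edges first hit at `i`. -/
noncomputable def coverage {α : Type*} (E : Finset (Finset α)) (σ : α → ℕ) (i : ℕ) : ℕ :=
  (E.filter fun e => firstHit σ e = i).card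

/-- An ordering of the vertex set `V`: a bijection onto positions `{1, ..., |V|}`. -/
def IsOrdering {α : Type*} (V : Finset α) (σ : α → ℕ) : Prop :=
  Set.BijOn σ ↑V (Set.Icc 1 V.card)


/-- A set cover: a set of vertices intersecting every hyperedge.  For a graph
(each edge has two vertices) this is a vertex cover. -/
def IsSetCover {α : Type*} [DecidableEq α] (E : Finset (Finset α)) (S : Finset α) : Prop :=
  ∀ e ∈ E, (e ∩ S).Nonempty

section Ordering

variable {α : Type*} {V : Finset α} {σ : α → ℕ}

theorem isOrdering_of_injOn (hmaps : ∀ v ∈ V, 1 ≤ σ v ∧ σ v ≤ #V)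
    (hinj : Set.InjOn σ V) : IsOrdering V σ := by
  have hmaps' : Set.MapsTo σ V (Icc 1 #V : Finset ℕ) := fun v hv => by
    simpa using hmaps v hv
  refine ⟨fun v hv => hmaps v hv, hinj, ?_⟩
  simpa using surjOn_of_injOn_of_card_le σ hmaps' hinj (by simp)

theorem IsOrdering.one_le (hσ : IsOrdering V σ) {v : α} (hv : v ∈ V) : 1 ≤ σ v :=
  (hσ.mapsTo hv).1

theorem IsOrdering.le_card (hσ : IsOrdering V σ) {v : α} (hv : v ∈ V) : σ v ≤ #V :=
  (hσ.mapsTo hv).2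

theorem IsOrdering.card_filter_le_le (hσ : IsOrdering V σ) (j : ℕ) :
    #{v ∈ V | σ v ≤ j} ≤ j := by
  have hinj : Set.InjOn σ ({v ∈ V | σ v ≤ j} : Finset α) :=
    hσ.injOn.mono fun v hv => (mem_filter.1 hv).1
  calc #{v ∈ V | σ v ≤ j} = #(({v ∈ V | σ v ≤ j} : Finset α).image σ) :=
        (card_image_of_injOn hinj).symm
    _ ≤ #(Icc 1 j) := card_le_card fun p hp => by
        obtain ⟨v, hv, rfl⟩ := mem_image.1 hp
        simp only [mem_filter] at hv
        simpa [hv.2] using hσ.one_le hv.1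
    _ = j := by simp

theorem IsOrdering.le_card_filter_le (hσ : IsOrdering V σ) {j : ℕ} (hj : j ≤ #V) :
    j ≤ #{v ∈ V | σ v ≤ j} := by
  calc j = #(Icc 1 j) := by simp
    _ ≤ #(({v ∈ V | σ v ≤ j} : Finset α).image σ) := card_le_card fun p hp => by
        obtain ⟨v, hv, rfl⟩ := hσ.surjOn (by simp at hp ⊢; omega : p ∈ Set.Icc 1 #V)
        exact mem_image_of_mem σ (by simp at hp ⊢; tauto)
    _ ≤ #{v ∈ V | σ v ≤ j} := card_image_le

theorem firstHit_le {e : Finset α} {x : α} (hx : x ∈ e) : firstHit σ e ≤ σ x :=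
  Nat.sInf_le ⟨x, hx, rfl⟩

theorem exists_mem_firstHit_eq {e : Finset α} (he : e.Nonempty) :
    ∃ x ∈ e, σ x = firstHit σ e := by
  obtain ⟨x, hx, hσx⟩ := Nat.sInf_mem ((coe_nonempty.2 he).image σ)
  exact ⟨x, hx, hσx⟩

theorem IsOrdering.one_le_firstHit (hσ : IsOrdering V σ) {e : Finset α} (he : e.Nonempty)
    (heV : e ⊆ V) : 1 ≤ firstHit σ e := by
  obtain ⟨x, hx, hσx⟩ := exists_mem_firstHit_eq (σ := σ) he
  exact hσx ▸ hσ.one_le (heV hx)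

theorem IsOrdering.firstHit_le_card (hσ : IsOrdering V σ) {e : Finset α} (he : e.Nonempty)
    (heV : e ⊆ V) : firstHit σ e ≤ #V := by
  obtain ⟨x, hx, hσx⟩ := exists_mem_firstHit_eq (σ := σ) he
  exact hσx ▸ hσ.le_card (heV hx)

theorem firstHit_le_firstHit {ρ : α → ℕ} {e : Finset α} (he : e.Nonempty)
    (h : ∀ x ∈ e, σ x = firstHit σ e → ρ x ≤ σ x) : firstHit ρ e ≤ firstHit σ e := by
  obtain ⟨x, hx, hσx⟩ := exists_mem_firstHit_eq (σ := σ) he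
  exact (firstHit_le hx).trans (hσx ▸ h x hx hσx)

end Ordering

section Rank

variable {α β : Type*} [LinearOrder β] {V : Finset α} {f : α → β}

def rankBy (V : Finset α) (f : α → β) (v : α) : ℕ :=
  #{u ∈ V | f u < f v} + 1

theorem rankBy_lt_rankBy {u v : α} (hu : u ∈ V) (h : f u < f v) :
    rankBy V f u < rankBy V f v := by
  have : {w ∈ V | f w < f u} ⊂ {w ∈ V | f w < f v} := by
    refine ssubset_iff_of_subset (fun w hw => ?_) |>.2 ⟨u, ?_, ?_⟩
    · simp only [mem_filter] at hw ⊢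
      exact ⟨hw.1, hw.2.trans h⟩
    · simp [hu, h]
    · simp
  unfold rankBy
  have := card_lt_card this
  omega

theorem isOrdering_rankBy (hf : Set.InjOn f V) : IsOrdering V (rankBy V f) := by
  refine isOrdering_of_injOn (fun v hv => ⟨by simp [rankBy], ?_⟩) fun u hu v hv huv => ?_
  · have : {u ∈ V | f u < f v} ⊂ V := filter_ssubset.2 ⟨v, hv, lt_irrefl _⟩
    have := card_lt_card this
    unfold rankBy
    omega
  · rcases lt_trichotomy (f u) (f v) with h | h | h
    · exact absurd huv (rankBy_lt_rankBy hu h).ne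
    · exact hf hu hv h
    · exact absurd huv (rankBy_lt_rankBy hv h).ne'

end Rank

def IsCostMinimal {α : Type*} (V : Finset α) (E : Finset (Finset α)) (σ : α → ℕ) : Prop :=
  ∀ ρ : α → ℕ, IsOrdering V ρ → totalCost E σ ≤ totalCost E ρ

noncomputable def uncoveredCount {α : Type*} (E : Finset (Finset α)) (σ : α → ℕ) (i : ℕ) : ℕ :=
  #{e ∈ E | i < firstHit σ e}

/-- The cost still to be paid after position `i`; truncated subtraction makes the edges
covered by then contribute `0`. -/
noncomputable def residualCost {α : Type*} (E : Finset (Finset α)) (σ : α → ℕ) (i : ℕ) : ℕ :=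
  ∑ e ∈ E, (firstHit σ e - i)

section Cost

variable {α : Type*} {V : Finset α} {E : Finset (Finset α)} {σ : α → ℕ}

theorem nonempty_and_subset_of_card_eq_two (hE : ∀ e ∈ E, #e = 2 ∧ e ⊆ V) :
    ∀ e ∈ E, e.Nonempty ∧ e ⊆ V :=
  fun e he => ⟨card_pos.1 ((hE e he).1 ▸ two_pos), (hE e he).2⟩

theorem coverage_eq_sum (i : ℕ) :
    coverage E σ i = ∑ e ∈ E, if firstHit σ e = i then 1 else 0 := by
  rw [coverage, card_filter]

theorem uncoveredCount_eq_sum (i : ℕ) :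
    uncoveredCount E σ i = ∑ e ∈ E, if i < firstHit σ e then 1 else 0 := by
  rw [uncoveredCount, card_filter]

theorem uncoveredCount_eq_add (i : ℕ) :
    uncoveredCount E σ i = uncoveredCount E σ (i + 1) + coverage E σ (i + 1) := by
  simp only [uncoveredCount_eq_sum, coverage_eq_sum, ← sum_add_distrib]
  refine sum_congr rfl fun e _ => ?_
  split_ifs <;> omega

theorem uncoveredCount_zero (hE : ∀ e ∈ E, e.Nonempty ∧ e ⊆ V) (hσ : IsOrdering V σ) :
    uncoveredCount E σ 0 = #E := by
  rw [uncoveredCount]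
  congr 1
  exact filter_true_of_mem fun e he => hσ.one_le_firstHit (hE e he).1 (hE e he).2

theorem residualCost_eq_add (i : ℕ) :
    residualCost E σ i = residualCost E σ (i + 1) + uncoveredCount E σ i := by
  simp only [residualCost, uncoveredCount_eq_sum, ← sum_add_distrib]
  refine sum_congr rfl fun e _ => ?_
  split_ifs <;> omega

theorem residualCost_eq_add_sum (i m : ℕ) :
    residualCost E σ i = residualCost E σ (i + m) + ∑ j ∈ range m, uncoveredCount E σ (i + j) := by
  induction m with
  | zero => simp
  | succ m ih => rw [ih, residualCost_eq_add (i + m), sum_range_succ]; ring_nf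

theorem coverage_eq_zero_of_card_lt (hE : ∀ e ∈ E, e.Nonempty ∧ e ⊆ V) (hσ : IsOrdering V σ)
    {i : ℕ} (hi : #V < i) : coverage E σ i = 0 := by
  rw [coverage, card_eq_zero, filter_eq_empty_iff]
  intro e he
  have := hσ.firstHit_le_card (hE e he).1 (hE e he).2
  omega

theorem coverage_succ_le (hE : ∀ e ∈ E, e.Nonempty ∧ e ⊆ V) (hσ : IsOrdering V σ)
    (hopt : IsCostMinimal V E σ) {i : ℕ} (hi : 1 ≤ i) :
    coverage E σ (i + 1) ≤ coverage E σ i := by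
  by_cases hin : #V < i + 1
  · simp [coverage_eq_zero_of_card_lt hE hσ hin]
  let swap : ℕ → ℕ := Equiv.swap i (i + 1)
  have hswap : IsOrdering V (swap ∘ σ) := by
    refine isOrdering_of_injOn (fun v hv => ?_) ((Equiv.injective _).comp_injOn hσ.injOn)
    have := hσ.one_le hv
    have := hσ.le_card hv
    simp only [Function.comp, swap, Equiv.swap_apply_def]
    split_ifs <;> omega
  have hpt : ∀ e ∈ E, firstHit (swap ∘ σ) e + (if firstHit σ e = i + 1 then 1 else 0) ≤
      firstHit σ e + (if firstHit σ e = i then 1 else 0) := by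
    intro e he
    obtain ⟨x, hx, hσx⟩ := exists_mem_firstHit_eq (σ := σ) (hE e he).1
    have hle : firstHit (swap ∘ σ) e ≤ Equiv.swap i (i + 1) (firstHit σ e) :=
      hσx ▸ firstHit_le hx
    rw [Equiv.swap_apply_def] at hle
    split_ifs at hle ⊢ <;> omega
  have := sum_le_sum hpt
  rw [sum_add_distrib, sum_add_distrib, ← totalCost, ← totalCost, ← coverage_eq_sum,
    ← coverage_eq_sum] at this
  have := hopt _ hswap
  omega

theorem coverage_le_of_le (hE : ∀ e ∈ E, e.Nonempty ∧ e ⊆ V) (hσ : IsOrdering V σ)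
    (hopt : IsCostMinimal V E σ) {i j : ℕ} (hi : 1 ≤ i) (hij : i ≤ j) :
    coverage E σ j ≤ coverage E σ i := by
  induction j, hij using Nat.le_induction with
  | base => rfl
  | succ j hij ih => exact (coverage_succ_le hE hσ hopt (hi.trans hij)).trans ih

end Cost

/-- Sorting by this key keeps the first `i` positions of `σ`, then lists the remaining
vertices of `S` in the order of `σ` (`ε = 1`) or in the reverse order (`ε = -1`), and then
the rest of the vertices. -/
def coverFirstKey {α : Type*} [DecidableEq α] (σ : α → ℕ) (S : Finset α) (i : ℕ) (ε : ℤ)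
    (v : α) : ℕ ×ₗ ℤ :=
  toLex (if σ v ≤ i then (0, σ v) else if v ∈ S then (1, ε * σ v) else (2, σ v))

section CoverFirst

variable {α : Type*} [DecidableEq α] {V : Finset α} {σ : α → ℕ} {S : Finset α} {i : ℕ}
  {ε : ℤ}

theorem injOn_coverFirstKey (hσ : Set.InjOn σ V) (hε : ε ≠ 0) :
    Set.InjOn (coverFirstKey σ S i ε) V := by
  intro u hu v hv h
  refine hσ hu hv ?_
  simp only [coverFirstKey, toLex_inj] at h
  split_ifs at h <;> simp_all [Prod.ext_iff]

theorem rankBy_coverFirstKey_le_of_le (hσ : IsOrdering V σ) {v : α} (hv : v ∈ V)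
    (hvi : σ v ≤ i) : rankBy V (coverFirstKey σ S i ε) v ≤ σ v := by
  have hsub : {u ∈ V | coverFirstKey σ S i ε u < coverFirstKey σ S i ε v} ⊆
      {u ∈ V | σ u ≤ σ v - 1} := by
    intro u hu
    simp only [mem_filter, coverFirstKey, hvi, if_true, Prod.Lex.toLex_lt_toLex] at hu ⊢
    refine ⟨hu.1, ?_⟩
    split_ifs at hu
    · simp only [lt_self_iff_false, true_and, false_or, Nat.cast_lt] at hu
      omega
    all_goals simp at hu
  have := (card_le_card hsub).trans (hσ.card_filter_le_le _)
  have := hσ.one_le hv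
  unfold rankBy
  omega

theorem rankBy_coverFirstKey_le_of_mem (hσ : IsOrdering V σ) {v : α} (hvS : v ∈ S)
    (hvi : i < σ v) :
    rankBy V (coverFirstKey σ S i ε) v ≤ i + #{u ∈ S | ε * σ u < ε * σ v} + 1 := by
  have hsub : {u ∈ V | coverFirstKey σ S i ε u < coverFirstKey σ S i ε v} ⊆
      {u ∈ V | σ u ≤ i} ∪ {u ∈ S | ε * σ u < ε * σ v} := by
    intro u hu
    simp only [mem_filter, mem_union, coverFirstKey, hvi.not_ge, hvS, if_false, if_true,
      Prod.Lex.toLex_lt_toLex] at hu ⊢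
    split_ifs at hu with h1 h2
    · exact Or.inl ⟨hu.1, h1⟩
    · simp only [lt_self_iff_false, true_and, false_or] at hu
      exact Or.inr ⟨h2, hu.2⟩
    · simp at hu
  have := (card_le_card hsub).trans (card_union_le _ _)
  have := hσ.card_filter_le_le i
  unfold rankBy
  omega

end CoverFirst

section Master

variable {α : Type*} [DecidableEq α] {V : Finset α} {E : Finset (Finset α)} {σ : α → ℕ}
  {S : Finset α}

theorem card_filter_lt_add_card_filter_gt_le (S : Finset α) (σ : α → ℕ) {s : α} (hs : s ∈ S) :
    #{u ∈ S | σ u < σ s} + #{u ∈ S | σ s < σ u} ≤ #S - 1 := by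
  rw [← card_union_of_disjoint (disjoint_filter.2 fun u _ h h' => by omega),
    ← card_erase_of_mem hs]
  refine card_le_card fun u hu => ?_
  simp only [mem_union, mem_filter] at hu
  exact mem_erase.2 ⟨by rintro rfl; omega, by tauto⟩

theorem two_mul_residualCost_le (hE : ∀ e ∈ E, e.Nonempty ∧ e ⊆ V) (hS : IsSetCover E S)
    (hσ : IsOrdering V σ) (hopt : IsCostMinimal V E σ) (i : ℕ) :
    2 * residualCost E σ i ≤ (#S + 1) * uncoveredCount E σ i := by
  set ρ : ℤ → α → ℕ := fun ε => rankBy V (coverFirstKey σ S i ε)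
  have hρ (ε : ℤ) (hε : ε ≠ 0) : IsOrdering V (ρ ε) :=
    isOrdering_rankBy (injOn_coverFirstKey hσ.injOn hε)
  have hcover (s : α) (hs : s ∈ S) (hsi : i < σ s) : ρ 1 s + ρ (-1) s ≤ 2 * i + #S + 1 := by
    have h₁ : ρ 1 s ≤ _ := rankBy_coverFirstKey_le_of_mem hσ hs hsi
    have h₂ : ρ (-1) s ≤ _ := rankBy_coverFirstKey_le_of_mem hσ hs hsi
    simp only [one_mul, neg_one_mul, neg_lt_neg_iff, Nat.cast_lt] at h₁ h₂
    have := card_filter_lt_add_card_filter_gt_le S σ hs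
    have := card_pos.2 ⟨s, hs⟩
    omega
  have hpt : ∀ e ∈ E, firstHit (ρ 1) e + firstHit (ρ (-1)) e + 2 * (firstHit σ e - i) ≤
      2 * firstHit σ e + (#S + 1) * (if i < firstHit σ e then 1 else 0) := by
    intro e he
    split_ifs with hei
    · obtain ⟨s, hs⟩ := hS e he
      obtain ⟨hse, hsS⟩ := mem_inter.1 hs
      have := hcover s hsS (hei.trans_le (firstHit_le hse))
      have := firstHit_le (σ := ρ 1) hse
      have := firstHit_le (σ := ρ (-1)) hse
      omega
    · have hle (ε : ℤ) : firstHit (ρ ε) e ≤ firstHit σ e :=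
        firstHit_le_firstHit (hE e he).1 fun x hx hσx =>
          rankBy_coverFirstKey_le_of_le hσ ((hE e he).2 hx) (by omega)
      have := hle 1
      have := hle (-1)
      omega
  have := sum_le_sum hpt
  simp only [sum_add_distrib, ← mul_sum, ← totalCost.eq_1, ← residualCost.eq_1,
    ← uncoveredCount_eq_sum] at this
  have := hopt _ (hρ 1 one_ne_zero)
  have := hopt _ (hρ (-1) (by norm_num))
  omega

end Master

section Decay

variable {α : Type*} {E : Finset (Finset α)} {σ : α → ℕ} {c i : ℕ}

theorem uncoveredCount_le_add_mul (hcov : ∀ j, i < j → coverage E σ j ≤ c) (m : ℕ) :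
    uncoveredCount E σ i ≤ uncoveredCount E σ (i + m) + m * c := by
  induction m with
  | zero => simp
  | succ m ih =>
    have := uncoveredCount_eq_add (E := E) (σ := σ) (i + m)
    have := hcov (i + m + 1) (by omega)
    rw [← add_assoc, add_one_mul]
    omega

/-- The residual cost at `i` is at least `U + (U - c) + ... + (U - c²)`, where `U` is the
number of edges uncovered at `i`. -/
theorem uncoveredCount_le_sq (hcost : 2 * residualCost E σ i ≤ (c + 1) * uncoveredCount E σ i)
    (hcov : ∀ j, i < j → coverage E σ j ≤ c) : uncoveredCount E σ i ≤ c ^ 2 := by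
  have hsum : (c + 1) * uncoveredCount E σ i ≤
      residualCost E σ i + c * ∑ j ∈ range (c + 1), j := by
    calc (c + 1) * uncoveredCount E σ i = ∑ _j ∈ range (c + 1), uncoveredCount E σ i := by simp
      _ ≤ ∑ j ∈ range (c + 1), (uncoveredCount E σ (i + j) + c * j) :=
          sum_le_sum fun j _ => (uncoveredCount_le_add_mul hcov j).trans_eq (by ring)
      _ ≤ residualCost E σ i + c * ∑ j ∈ range (c + 1), j := by
          rw [sum_add_distrib, ← mul_sum, residualCost_eq_add_sum i (c + 1)]
          omega
  have hgauss := sum_range_id_mul_two (c + 1)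
  rw [Nat.add_sub_cancel] at hgauss
  have : (c + 1) * uncoveredCount E σ i ≤ (c + 1) * c ^ 2 := by nlinarith
  exact Nat.le_of_mul_le_mul_left this c.succ_pos

theorem residualCost_succ_le
    (hcost : 2 * residualCost E σ i ≤ (c + 1) * uncoveredCount E σ i) :
    (c + 1) * residualCost E σ (i + 1) ≤ (c - 1) * residualCost E σ i := by
  have := residualCost_eq_add (E := E) (σ := σ) i
  rcases c with _ | c
  · simp only [zero_add, one_mul, zero_tsub, zero_mul] at hcost ⊢
    omega
  · simp only [add_tsub_cancel_right]
    nlinarith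

theorem pow_mul_residualCost_le
    (hcost : ∀ j, 2 * residualCost E σ j ≤ (c + 1) * uncoveredCount E σ j) (i m : ℕ) :
    (c + 1) ^ m * residualCost E σ (i + m) ≤ (c - 1) ^ m * residualCost E σ i := by
  induction m with
  | zero => simp
  | succ m ih =>
    calc (c + 1) ^ (m + 1) * residualCost E σ (i + (m + 1))
        = (c + 1) ^ m * ((c + 1) * residualCost E σ (i + m + 1)) := by ring_nf
      _ ≤ (c + 1) ^ m * ((c - 1) * residualCost E σ (i + m)) :=
          Nat.mul_le_mul_left _ (residualCost_succ_le (hcost _))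
      _ = (c - 1) * ((c + 1) ^ m * residualCost E σ (i + m)) := by ring
      _ ≤ (c - 1) * ((c - 1) ^ m * residualCost E σ i) := by gcongr
      _ = (c - 1) ^ (m + 1) * residualCost E σ i := by ring

/-- The edge `e` alone makes the residual cost at position `firstHit σ e - 1` positive. -/
theorem two_mul_pow_le_of_lt_firstHit
    (hcost : ∀ j, 2 * residualCost E σ j ≤ (c + 1) * uncoveredCount E σ j)
    (hcov : ∀ j, i < j → coverage E σ j ≤ c) {e : Finset α} (he : e ∈ E)
    (hi : i < firstHit σ e) :
    2 * (c + 1) ^ (firstHit σ e - 1 - i) ≤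
      (c - 1) ^ (firstHit σ e - 1 - i) * ((c + 1) * c ^ 2) := by
  set m := firstHit σ e - 1 - i
  have hlast : 1 ≤ residualCost E σ (i + m) := by
    have : firstHit σ e - (i + m) = 1 := by omega
    exact this ▸ single_le_sum (f := fun e => firstHit σ e - (i + m)) (fun _ _ => Nat.zero_le _) he
  calc 2 * (c + 1) ^ m ≤ 2 * ((c + 1) ^ m * residualCost E σ (i + m)) := by
        gcongr
        exact Nat.le_mul_of_pos_right _ hlast
    _ ≤ (c - 1) ^ m * (2 * residualCost E σ i) := by
        linarith [pow_mul_residualCost_le hcost i m]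
    _ ≤ (c - 1) ^ m * ((c + 1) * uncoveredCount E σ i) := Nat.mul_le_mul_left _ (hcost i)
    _ ≤ (c - 1) ^ m * ((c + 1) * c ^ 2) :=
        Nat.mul_le_mul_left _ (Nat.mul_le_mul_left _ (uncoveredCount_le_sq (hcost i) hcov))

end Decay

section VertexCover

variable {α : Type*} [DecidableEq α] {V : Finset α} {E : Finset (Finset α)} {σ : α → ℕ}
  {S : Finset α}

theorem coverage_le_card_of_notMem (hE : ∀ e ∈ E, #e = 2 ∧ e ⊆ V) (hS : IsSetCover E S)
    (hσ : IsOrdering V σ) {w : α} (hw : w ∈ V) (hwS : w ∉ S) :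
    coverage E σ (σ w) ≤ #S := by
  have hsub : {e ∈ E | firstHit σ e = σ w} ⊆ S.image fun s => {w, s} := by
    intro e he
    obtain ⟨he, hew⟩ := mem_filter.1 he
    obtain ⟨x, hx, hσx⟩ := exists_mem_firstHit_eq (σ := σ) (card_pos.1 ((hE e he).1 ▸ two_pos))
    have hwe : w ∈ e := hσ.injOn ((hE e he).2 hx) hw (hσx.trans hew) ▸ hx
    obtain ⟨s, hs⟩ := hS e he
    obtain ⟨hse, hsS⟩ := mem_inter.1 hs
    refine mem_image.2 ⟨s, hsS, ?_⟩
    obtain ⟨a, b, hab, rfl⟩ := card_eq_two.1 (hE e he).1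
    simp only [mem_insert, mem_singleton] at hwe hse
    have : s ≠ w := by rintro rfl; exact hwS hsS
    rcases hwe with rfl | rfl <;> rcases hse with rfl | rfl <;> simp_all [pair_comm]
  rw [coverage]
  exact (card_le_card hsub).trans card_image_le

theorem firstHit_le_card_of_forall_mem (hE : ∀ e ∈ E, e ⊆ V) (hS : IsSetCover E S)
    (hσ : IsOrdering V σ) (hpre : ∀ w ∈ V, σ w ≤ #S → w ∈ S) {e : Finset α} (he : e ∈ E) :
    firstHit σ e ≤ #S := by
  obtain ⟨s, hs⟩ := hS e he
  obtain ⟨hse, hsS⟩ := mem_inter.1 hs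
  refine (firstHit_le hse).trans (not_lt.1 fun hlt => ?_)
  have hsV := hE e he hse
  have hsub : {w ∈ V | σ w ≤ #S} ⊆ S.erase s := fun w hw => by
    obtain ⟨hwV, hwS⟩ := mem_filter.1 hw
    exact mem_erase.2 ⟨by rintro rfl; omega, hpre w hwV hwS⟩
  have := card_le_card hsub
  rw [card_erase_of_mem hsS] at this
  have := hσ.le_card hsV
  have := hσ.le_card_filter_le (j := #S) (by omega)
  have := card_pos.2 ⟨s, hsS⟩
  omega

end VertexCover

open Real in
/-- With `log ((c + 1) / (c - 1)) ≥ 2 / c`, the hypothesis gives `m ≤ c (3 log c - 1/4) / 2`. -/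
theorem add_le_two_mul_logb {c m : ℕ} (hc : 2 ≤ c)
    (h : 2 * (c + 1) ^ m ≤ (c - 1) ^ m * ((c + 1) * c ^ 2)) :
    (c + m : ℝ) ≤ 2 * c * logb 2 c := by
  have hR : 2 * ((c : ℝ) + 1) ^ m ≤ ((c : ℝ) - 1) ^ m * (((c : ℝ) + 1) * (c : ℝ) ^ 2) := by
    rw [← Nat.cast_pred (by omega)]
    exact_mod_cast h
  have hx : (2 : ℝ) ≤ c := by exact_mod_cast hc
  generalize (c : ℝ) = x at hR hx ⊢
  have hx1 : (0 : ℝ) < x - 1 := by linarith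
  have hratio : ((x + 1) / (x - 1)) ^ m ≤ (x + 1) * x ^ 2 / 2 := by
    rw [div_pow, div_le_div_iff₀ (by positivity) two_pos]
    linarith
  have hlog_ratio : 2 / x ≤ log ((x + 1) / (x - 1)) := by
    have := sum_range_le_log_div (x := 1 / x) (by positivity)
      ((div_lt_one (by linarith)).2 (by linarith)) 1
    have hxy : (1 + 1 / x) / (1 - 1 / x) = (x + 1) / (x - 1) := by
      field_simp
    rw [hxy] at this
    norm_num at this
    rw [div_eq_mul_inv]
    linarith
  have hlog_main : log ((x + 1) * x ^ 2 / 2) ≤ 3 * log x - 1 / 4 := by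
    have h34 : log (3 / 4 : ℝ) ≤ -(1 / 4) := by
      linarith [log_le_sub_one_of_pos (show (0 : ℝ) < 3 / 4 by norm_num)]
    calc log ((x + 1) * x ^ 2 / 2) ≤ log (3 / 4 * x ^ 3) :=
          log_le_log (by positivity) (by nlinarith)
      _ = log (3 / 4) + 3 * log x := by
          rw [log_mul (by norm_num) (by positivity), log_pow]
          norm_num
      _ ≤ 3 * log x - 1 / 4 := by linarith
  have hm : (m : ℝ) * (2 / x) ≤ 3 * log x - 1 / 4 :=
    calc (m : ℝ) * (2 / x) ≤ m * log ((x + 1) / (x - 1)) := by gcongr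
      _ = log (((x + 1) / (x - 1)) ^ m) := (log_pow _ _).symm
      _ ≤ log ((x + 1) * x ^ 2 / 2) := log_le_log (by positivity) hratio
      _ ≤ 3 * log x - 1 / 4 := hlog_main
  have hm' : 2 * (m : ℝ) ≤ x * (3 * log x - 1 / 4) := by
    have := mul_le_mul_of_nonneg_left hm (by linarith : (0 : ℝ) ≤ x)
    rw [mul_left_comm, mul_div_cancel₀ _ (by linarith)] at this
    linarith
  have hlog2 : 0 < log 2 := log_pos one_lt_two
  have hlog2_le : log 2 ≤ 3 / 4 := by linarith [log_two_lt_d9]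
  have hlog2_le_log : log 2 ≤ log x := log_le_log two_pos hx
  rw [logb, mul_div_assoc', le_div_iff₀ hlog2]
  nlinarith [mul_le_mul_of_nonneg_left hm' hlog2.le,
    mul_le_mul_of_nonneg_left hlog2_le_log (by linarith : (0 : ℝ) ≤ x),
    mul_le_mul_of_nonneg_right hlog2_le (mul_nonneg (by linarith : (0 : ℝ) ≤ x)
      (hlog2.le.trans hlog2_le_log))]

theorem self_le_two_mul_logb {c : ℕ} (hc : 2 ≤ c) : (c : ℝ) ≤ 2 * c * Real.logb 2 c := by
  simpa using add_le_two_mul_logb (m := 0) hc (by simp; nlinarith)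

section Bound

variable {α : Type*} [DecidableEq α] {V : Finset α} {E : Finset (Finset α)} {σ : α → ℕ}
  {S : Finset α}

theorem firstHit_le_two_mul_logb (hE : ∀ e ∈ E, #e = 2 ∧ e ⊆ V) (hS : IsSetCover E S)
    (hc : 2 ≤ #S) (hσ : IsOrdering V σ) (hopt : IsCostMinimal V E σ) {e : Finset α}
    (he : e ∈ E) : (firstHit σ e : ℝ) ≤ 2 * #S * Real.logb 2 #S := by
  have hE' := nonempty_and_subset_of_card_eq_two hE
  have hself := self_le_two_mul_logb hc
  by_cases hpre : ∀ w ∈ V, σ w ≤ #S → w ∈ S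
  · have := firstHit_le_card_of_forall_mem (fun e he => (hE e he).2) hS hσ hpre he
    exact le_trans (by exact_mod_cast this) hself
  obtain ⟨w, hwV, hwS, hwnS⟩ : ∃ w ∈ V, σ w ≤ #S ∧ w ∉ S := by simpa using hpre
  have hcov (j : ℕ) (hj : σ w - 1 < j) : coverage E σ j ≤ #S :=
    (coverage_le_of_le hE' hσ hopt (hσ.one_le hwV) (by omega)).trans
      (coverage_le_card_of_notMem hE hS hσ hwV hwnS)
  by_cases hew : firstHit σ e ≤ σ w - 1
  · exact le_trans (by exact_mod_cast hew.trans (by omega)) hself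
  refine le_trans ?_ (add_le_two_mul_logb hc (two_mul_pow_le_of_lt_firstHit
    (two_mul_residualCost_le hE' hS hσ hopt) hcov he (by omega)))
  exact_mod_cast (by omega : firstHit σ e ≤ #S + (firstHit σ e - 1 - (σ w - 1)))

end Bound

theorem stmt_9_general {α : Type*} [DecidableEq α] (V : Finset α) (E : Finset (Finset α))
    (hE : ∀ e ∈ E, e.card = 2 ∧ e ⊆ V)
    (tau : ℕ) (htau : 2 ≤ tau)
    (S : Finset α) (hScov : IsSetCover E S) (hScard : S.card = tau)
    (σ : α → ℕ) (hσ : IsOrdering V σ)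
    (hopt : ∀ τ' : α → ℕ, IsOrdering V τ' → totalCost E σ ≤ totalCost E τ') :
    (∀ v ∈ V, σ v = 1 → v ∉ S → coverage E σ 1 ≤ tau ∧ E.card ≤ tau ^ 2) ∧
    ((E.sup (firstHit σ) : ℕ) : ℝ) ≤ 2 * (tau : ℝ) * Real.logb 2 (tau : ℝ) := by
  subst hScard
  have hE' := nonempty_and_subset_of_card_eq_two hE
  refine ⟨fun v hv hv1 hvS => ?_, ?_⟩
  · have hcov (j : ℕ) (hj : 0 < j) : coverage E σ j ≤ #S :=
      (coverage_le_of_le hE' hσ hopt le_rfl hj).trans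
        (hv1 ▸ coverage_le_card_of_notMem hE hScov hσ hv hvS)
    refine ⟨hcov 1 one_pos, ?_⟩
    rw [← uncoveredCount_zero hE' hσ]
    exact uncoveredCount_le_sq (two_mul_residualCost_le hE' hScov hσ hopt 0) hcov
  · have hnonneg := (Nat.cast_nonneg _).trans (self_le_two_mul_logb htau)
    calc ((E.sup (firstHit σ) : ℕ) : ℝ)
        ≤ ⌊2 * #S * Real.logb 2 #S⌋₊ :=
          Nat.cast_le.2 (Finset.sup_le fun e he => Nat.le_floor
            (firstHit_le_two_mul_logb hE hScov htau hσ hopt he))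
      _ ≤ 2 * #S * Real.logb 2 #S := Nat.floor_le hnonneg

/-- For a graph `G` (a rank-two hypergraph) with vertex cover number `τ ≥ 2` and a fixed
minimum vertex cover `S`: in any cost-minimizing ordering `σ` whose first vertex lies
outside `S`, the first effective coverage is at most `τ` and `|E(G)| ≤ τ²`; moreover
(for any cost-minimizing ordering) the associated cover size satisfies
`τ⁺ ≤ 2 τ log₂ τ`. -/
theorem stmt_9 {α : Type*} [DecidableEq α] (V : Finset α) (E : Finset (Finset α))
    (hE : ∀ e ∈ E, e.card = 2 ∧ e ⊆ V)
    (tau : ℕ) (htau : 2 ≤ tau)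
    (S : Finset α) (hSV : S ⊆ V) (hScov : IsSetCover E S) (hScard : S.card = tau)
    (hSmin : ∀ T ⊆ V, IsSetCover E T → tau ≤ T.card)
    (σ : α → ℕ) (hσ : IsOrdering V σ)
    (hopt : ∀ τ' : α → ℕ, IsOrdering V τ' → totalCost E σ ≤ totalCost E τ') :
    (∀ v ∈ V, σ v = 1 → v ∉ S → coverage E σ 1 ≤ tau ∧ E.card ≤ tau ^ 2) ∧
    ((E.sup (firstHit σ) : ℕ) : ℝ) ≤ 2 * (tau : ℝ) * Real.logb 2 (tau : ℝ) :=
  stmt_9_general V E hE tau htau S hScov hScard σ hσ hopt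
end

section
/- Let G be a graph with n >= 3 vertices and m edges, and H_G the associated hypergraph. Any ordering of V(H_G) that places all three vertices of B in positions n+1, n+2, n+3 (after all of A) has total cost strictly less than 6*(2^n - 1 - C(n,2) + m), the cost of the ordering that places B first. -/
open Finset

/-- The edge set of the hypergraph `H_G` associated with a graph `G` on `Fin n`:
vertices are `A ∪ B` with `A = V(G)` (embedded by `Sum.inl`) and `B = {b₁, b₂, b₃}`
(embedded by `Sum.inr`); edges are `{vᵢ, b_k}`, `{vᵢ, vⱼ, b_k}` for `vᵢvⱼ ∈ E(G)`,
and `X ∪ {b_k}` for `X ⊆ A` with `|X| ≥ 3`. -/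
def IsHG {n : ℕ} (G : SimpleGraph (Fin n)) (E : Finset (Finset (Fin n ⊕ Fin 3))) : Prop :=
  ∀ e : Finset (Fin n ⊕ Fin 3),
    e ∈ E ↔
      (∃ (i : Fin n) (k : Fin 3), e = {Sum.inl i, Sum.inr k}) ∨
      (∃ (i j : Fin n) (k : Fin 3), G.Adj i j ∧ e = {Sum.inl i, Sum.inl j, Sum.inr k}) ∨
      (∃ X : Finset (Fin n), 3 ≤ X.card ∧ ∃ k : Fin 3, e = X.image Sum.inl ∪ {Sum.inr k})

/-!
Once `B` comes last, every edge `X ∪ {b_k}` of `H_G` is first hit inside `X`, so the cost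
is `3 ∑ min σ(X)` over the traces `X` of the edges on `A`: all nonempty `X ⊆ A` except the
non-edges of `G`. Over all nonempty subsets of `{1, …, n}` the minima sum to `2^(n+1) - n - 2`,
just below twice their number `2^n - 1`. A non-edge has minimum at least `2` unless it contains
the first vertex, which at most `n - 1` of them do, so removing the `C(n,2) - m` non-edges
leaves a sum strictly below twice the number `2^n - 1 - C(n,2) + m` of traces.
-/

lemma Nat.sInf_insert_of_le {s : Set ℕ} {x a : ℕ} (hx : x ∈ s) (hxa : x ≤ a) :
    sInf (insert a s) = sInf s := by
  rw [csInf_insert (OrderBot.bddBelow s) ⟨x, hx⟩]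
  exact min_eq_right ((Nat.sInf_le hx).trans hxa)

/-- The empty set contributes `sInf ∅ = 0`. -/
lemma sum_sInf_powerset_Icc (n : ℕ) :
    ∑ Y ∈ (Icc 1 n).powerset, sInf (Y : Set ℕ) + n + 2 = 2 ^ (n + 1) := by
  induction n with
  | zero => simp
  | succ n ih =>
    have hIcc : Icc 1 (n + 1) = insert (n + 1) (Icc 1 n) := by ext; simp; omega
    have hinsert : ∀ Y ∈ (Icc 1 n).powerset, sInf ((insert (n + 1) Y : Finset ℕ) : Set ℕ)
        = sInf (Y : Set ℕ) + if Y = ∅ then n + 1 else 0 := by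
      intro Y hY
      rw [coe_insert]
      rcases Y.eq_empty_or_nonempty with rfl | ⟨x, hx⟩
      · simp
      · rw [Nat.sInf_insert_of_le hx (by grind), if_neg (ne_empty_of_mem hx), add_zero]
    rw [hIcc, sum_powerset_insert (by simp), sum_congr rfl hinsert, sum_add_distrib,
      sum_ite_eq', if_pos (empty_mem_powerset _), pow_succ]
    omega

lemma sum_sInf_image_powerset {α : Type*} [Fintype α] [DecidableEq α] {τ : α → ℕ}
    (hτ : Function.Injective τ) (himg : univ.image τ = Icc 1 (Fintype.card α)) :
    ∑ X : Finset α, sInf (τ '' X) + Fintype.card α + 2 = 2 ^ (Fintype.card α + 1) := by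
  rw [← sum_sInf_powerset_Icc, ← himg, powerset_image,
    sum_image fun X _ Y _ h => image_injective hτ h]
  simp [coe_image]

lemma le_sInf_image {α : Type*} {τ : α → ℕ} {X : Finset α} (hX : X.Nonempty) {c : ℕ}
    (h : ∀ x ∈ X, c ≤ τ x) : c ≤ sInf (τ '' X) :=
  le_csInf ((coe_nonempty.2 hX).image τ) (by simpa using h)

lemma card_filter_mem_le_of_card_eq_two {α : Type*} [Fintype α] [DecidableEq α]
    {F : Finset (Finset α)} (hF : ∀ X ∈ F, #X = 2) (a : α) :
    #{X ∈ F | a ∈ X} ≤ Fintype.card α - 1 := by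
  calc #{X ∈ F | a ∈ X} ≤ #((univ.erase a).powersetCard 1) := by
        refine card_le_card_of_injOn (·.erase a) (fun X hX => ?_) fun X hX Y hY h => ?_
        · rw [mem_coe, mem_filter] at hX
          simp [card_erase_of_mem hX.2, hF X hX.1, erase_subset_erase]
        · exact erase_injOn' a (mem_filter.1 hX).2 (mem_filter.1 hY).2 h
    _ = Fintype.card α - 1 := by simp

lemma two_mul_card_le_sum_sInf {α : Type*} [Fintype α] [DecidableEq α] {τ : α → ℕ}
    {F : Finset (Finset α)} (hF : ∀ X ∈ F, #X = 2) {a : α} (hτ : ∀ b, 1 ≤ τ b)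
    (ha : ∀ b ≠ a, 2 ≤ τ b) :
    2 * #F ≤ ∑ X ∈ F, sInf (τ '' X) + (Fintype.card α - 1) := by
  have hne : ∀ X ∈ F, X.Nonempty := fun X hX => card_pos.1 (by rw [hF X hX]; omega)
  have hwith : #{X ∈ F | a ∈ X} ≤ ∑ X ∈ F with a ∈ X, sInf (τ '' X) := by
    simpa using card_nsmul_le_sum {X ∈ F | a ∈ X} _ 1 fun X hX =>
      le_sInf_image (hne X (mem_filter.1 hX).1) fun b _ => hτ b
  have hwithout : 2 * #{X ∈ F | a ∉ X} ≤ ∑ X ∈ F with a ∉ X, sInf (τ '' X) := by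
    simpa [mul_comm] using card_nsmul_le_sum {X ∈ F | a ∉ X} _ 2 fun X hX =>
      le_sInf_image (hne X (mem_filter.1 hX).1) fun b hb =>
        ha b fun h => (mem_filter.1 hX).2 (h ▸ hb :)
  have := card_filter_mem_le_of_card_eq_two hF a
  rw [← sum_filter_add_sum_filter_not F (a ∈ ·),
    ← card_filter_add_card_filter_not (a ∈ ·)]
  omega

lemma IsOrdering.injective {α : Type*} [Fintype α] {σ : α → ℕ} (hσ : IsOrdering univ σ) :
    Function.Injective σ :=
  Set.injOn_univ.1 (by simpa using hσ.injOn)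

lemma IsOrdering.image_comp_inl_eq_Icc {α β : Type*} [Fintype α] [Fintype β]
    {σ : α ⊕ β → ℕ} (hσ : IsOrdering univ σ)
    (hB : ∀ b, Fintype.card α + 1 ≤ σ (.inr b)) :
    univ.image (σ ∘ Sum.inl) = Icc 1 (Fintype.card α) := by
  classical
  have hσinj := hσ.injective
  have hmaps : ∀ x, σ x ∈ Icc 1 (Fintype.card α + Fintype.card β) := fun x => by
    simpa using hσ.mapsTo (mem_coe.2 (mem_univ x))
  have hB' :
      univ.image (σ ∘ Sum.inr) = Ioc (Fintype.card α) (Fintype.card α + Fintype.card β) := by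
    refine eq_of_subset_of_card_le (fun y hy => ?_) ?_
    · obtain ⟨b, -, rfl⟩ := mem_image.1 hy
      exact mem_Ioc.2 ⟨hB b, (mem_Icc.1 (hmaps (.inr b))).2⟩
    · rw [card_image_of_injective _ (hσinj.comp Sum.inr_injective)]
      simp
  refine eq_of_subset_of_card_le (fun y hy => ?_) ?_
  · obtain ⟨a, -, rfl⟩ := mem_image.1 hy
    have ha := mem_Icc.1 (hmaps (.inl a))
    refine mem_Icc.2 ⟨ha.1, not_lt.1 fun hlt => ?_⟩
    obtain ⟨b, -, hb⟩ := mem_image.1 (hB' ▸ mem_Ioc.2 ⟨hlt, ha.2⟩ :)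
    exact Sum.inr_ne_inl (hσinj hb)
  · rw [card_image_of_injective _ (hσinj.comp Sum.inl_injective)]
    simp

namespace SimpleGraph

variable {V : Type*} [Fintype V] [DecidableEq V] (G : SimpleGraph V) [DecidableRel G.Adj]

lemma pair_mem_cliqueFinset_two {a b : V} (hab : a ≠ b) :
    {a, b} ∈ G.cliqueFinset 2 ↔ G.Adj a b := by
  simp [isNClique_iff, card_pair hab, hab]

lemma mem_cliqueFinset_two {X : Finset V} :
    X ∈ G.cliqueFinset 2 ↔ ∃ a b, G.Adj a b ∧ X = {a, b} := by
  constructor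
  · intro hX
    obtain ⟨a, b, hab, rfl⟩ := card_eq_two.1 (mem_cliqueFinset_iff.1 hX).card_eq
    exact ⟨a, b, (G.pair_mem_cliqueFinset_two hab).1 hX, rfl⟩
  · rintro ⟨a, b, hadj, rfl⟩
    exact (G.pair_mem_cliqueFinset_two hadj.ne).2 hadj

lemma card_cliqueFinset_two :
    #(G.cliqueFinset 2) = #G.edgeFinset := by
  symm
  refine card_bij (fun e _ => e.toFinset) (fun e he => ?_) (fun e₁ _ e₂ _ h => ?_)
    fun X hX => ?_
  · induction e using Sym2.ind with
    | _ a b =>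
      rw [Sym2.toFinset_mk_eq, G.mem_cliqueFinset_two]
      exact ⟨a, b, by simpa using he, rfl⟩
  · exact Sym2.ext fun x => by rw [← Sym2.mem_toFinset, h, Sym2.mem_toFinset]
  · obtain ⟨a, b, hadj, rfl⟩ := G.mem_cliqueFinset_two.1 hX
    exact ⟨s(a, b), by simpa using hadj, Sym2.toFinset_mk_eq⟩

lemma card_edgeFinset_add_card_edgeFinset_compl :
    #G.edgeFinset + #Gᶜ.edgeFinset = (Fintype.card V).choose 2 := by
  rw [← card_union_of_disjoint (disjoint_edgeFinset.2 disjoint_compl_right), ← edgeFinset_sup,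
    ← card_edgeFinset_top_eq_card_choose_two]
  congr! 2
  exact sup_compl_eq_top


/-- The sets `X ⊆ A` for which the sets `X ∪ {b_k}` are edges of `H_G`. -/
def hgTraces : Finset (Finset V) := {X | #X = 1 ∨ X ∈ G.cliqueFinset 2 ∨ 3 ≤ #X}

lemma compl_hgTraces : G.hgTracesᶜ = insert ∅ (Gᶜ.cliqueFinset 2) := by
  ext X
  simp only [hgTraces, compl_filter, mem_filter, mem_univ, true_and, mem_insert]
  constructor
  · intro hX
    obtain ⟨a, b, hab, rfl⟩ | h0 : (∃ a b, a ≠ b ∧ X = {a, b}) ∨ X = ∅ := by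
      rcases Nat.lt_or_ge #X 2 with h | h
      · exact .inr (card_eq_zero.1 (by omega))
      · exact .inl (card_eq_two.1 (by omega))
    · rw [G.pair_mem_cliqueFinset_two hab] at hX
      rw [Gᶜ.pair_mem_cliqueFinset_two hab, compl_adj]
      exact .inr ⟨hab, by tauto⟩
    · exact .inl h0
  · rintro (rfl | hX)
    · simp
    · obtain ⟨a, b, hadj, rfl⟩ := Gᶜ.mem_cliqueFinset_two.1 hX
      rw [G.pair_mem_cliqueFinset_two hadj.ne, card_pair hadj.ne]
      simp [(compl_adj G a b).1 hadj]

lemma nonempty_of_mem_hgTraces {X : Finset V} (hX : X ∈ G.hgTraces) : X.Nonempty := by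
  simp only [hgTraces, mem_filter, mem_univ, true_and, mem_cliqueFinset_iff] at hX
  rw [← card_pos]
  rcases hX with h | h | h
  · omega
  · rw [h.card_eq]; omega
  · omega

lemma sum_hgTraces_add_sum_cliqueFinset_compl {M : Type*} [AddCommMonoid M] (f : Finset V → M)
    (hf : f ∅ = 0) :
    ∑ X ∈ G.hgTraces, f X + ∑ X ∈ Gᶜ.cliqueFinset 2, f X = ∑ X, f X := by
  rw [← sum_add_sum_compl G.hgTraces, compl_hgTraces, sum_insert (by simp), hf, zero_add]

end SimpleGraph

lemma IsHG.mem_iff {n : ℕ} {G : SimpleGraph (Fin n)} [DecidableRel G.Adj]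
    {E : Finset (Finset (Fin n ⊕ Fin 3))} (hHG : IsHG G E) (e : Finset (Fin n ⊕ Fin 3)) :
    e ∈ E ↔ ∃ X ∈ G.hgTraces, ∃ k, X.disjSum {k} = e := by
  have h1 (i : Fin n) (k : Fin 3) : ({i} : Finset _).disjSum {k} = {.inl i, .inr k} := by
    ext (x | x) <;> simp
  have h2 (i j : Fin n) (k : Fin 3) :
      ({i, j} : Finset _).disjSum {k} = {.inl i, .inl j, .inr k} := by
    ext (x | x) <;> simp
  have h3 (X : Finset (Fin n)) (k : Fin 3) : X.disjSum {k} = X.image .inl ∪ {.inr k} := by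
    ext (x | x) <;> simp
  rw [hHG e]
  constructor
  · rintro (⟨i, k, rfl⟩ | ⟨i, j, k, hadj, rfl⟩ | ⟨X, hX, k, rfl⟩)
    · exact ⟨{i}, by simp [SimpleGraph.hgTraces], k, h1 i k⟩
    · refine ⟨{i, j}, mem_filter.2 ⟨mem_univ _, .inr (.inl ?_)⟩, k, h2 i j k⟩
      exact G.mem_cliqueFinset_two.2 ⟨i, j, hadj, rfl⟩
    · exact ⟨X, by simp [SimpleGraph.hgTraces, hX], k, h3 X k⟩
  · rintro ⟨X, hX, k, rfl⟩
    simp only [SimpleGraph.hgTraces, mem_filter, mem_univ, true_and, card_eq_one,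
      G.mem_cliqueFinset_two] at hX
    rcases hX with ⟨i, rfl⟩ | ⟨i, j, hadj, rfl⟩ | hX
    · exact .inl ⟨i, k, h1 i k⟩
    · exact .inr (.inl ⟨i, j, k, hadj, h2 i j k⟩)
    · exact .inr (.inr ⟨X, hX, k, h3 X k⟩)

lemma firstHit_disjSum_singleton {α β : Type*} (σ : α ⊕ β → ℕ) {X : Finset α}
    (hX : X.Nonempty) {b : β} (hb : ∀ a ∈ X, σ (.inl a) ≤ σ (.inr b)) :
    firstHit σ (X.disjSum {b}) = sInf ((σ ∘ Sum.inl) '' X) := by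
  obtain ⟨a, ha⟩ := hX
  have himage : σ '' ↑(X.disjSum {b}) = insert (σ (.inr b)) ((σ ∘ Sum.inl) '' X) := by
    ext y
    simp [or_comm, eq_comm]
  rw [firstHit, himage,
    Nat.sInf_insert_of_le (Set.mem_image_of_mem _ (mem_coe.2 ha)) (hb a ha)]

lemma IsHG.totalCost_eq {n : ℕ} {G : SimpleGraph (Fin n)} [DecidableRel G.Adj]
    {E : Finset (Finset (Fin n ⊕ Fin 3))} (hHG : IsHG G E) {σ : Fin n ⊕ Fin 3 → ℕ}
    (hσ : ∀ a k, σ (.inl a) ≤ σ (.inr k)) :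
    totalCost E σ = 3 * ∑ X ∈ G.hgTraces, sInf ((σ ∘ Sum.inl) '' X) := by
  have hE : E = (G.hgTraces ×ˢ univ).image fun p => p.1.disjSum {p.2} := by
    ext e
    simp [hHG.mem_iff]
  rw [totalCost, hE, sum_image fun p _ q _ h => ?_, sum_product, mul_sum]
  · refine sum_congr rfl fun X hX => ?_
    simp [firstHit_disjSum_singleton σ (G.nonempty_of_mem_hgTraces hX) fun a _ => hσ a _]
  · obtain ⟨h₁, h₂⟩ := Finset.Injective2_disjSum h
    exact Prod.ext h₁ (singleton_injective h₂)

/-- In `H_G` (with `|V(G)| = n ≥ 3` and `|E(G)| = m`), any ordering placing all three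
vertices of `B` in positions `n+1, n+2, n+3` (after all of `A`) has total cost strictly
less than `6 (2ⁿ - 1 - C(n,2) + m)`, the cost of the ordering placing `B` first. -/
theorem stmt_12 (n : ℕ) (hn : 3 ≤ n) (G : SimpleGraph (Fin n)) [DecidableRel G.Adj]
    (E : Finset (Finset (Fin n ⊕ Fin 3))) (hHG : IsHG G E)
    (σ : Fin n ⊕ Fin 3 → ℕ) (hσ : IsOrdering Finset.univ σ)
    (hB : ∀ k : Fin 3, n + 1 ≤ σ (Sum.inr k)) :
    totalCost E σ < 6 * (2 ^ n - 1 - n.choose 2 + G.edgeFinset.card) := by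
  set τ := σ ∘ Sum.inl
  have hτ : univ.image τ = Icc 1 n := by simpa using hσ.image_comp_inl_eq_Icc (by simpa using hB)
  have hτ_mem (a : Fin n) : τ a ∈ Icc 1 n := hτ ▸ mem_image_of_mem τ (mem_univ a)
  have hτ_inj : Function.Injective τ := hσ.injective.comp Sum.inl_injective
  obtain ⟨a, -, ha⟩ :=
    mem_image.1 (hτ ▸ mem_Icc.2 ⟨le_rfl, by omega⟩ : 1 ∈ univ.image τ)
  have hcost : totalCost E σ = 3 * ∑ X ∈ G.hgTraces, sInf (τ '' X) :=
    hHG.totalCost_eq fun a k => ((mem_Icc.1 (hτ_mem a)).2.trans n.le_succ).trans (hB k)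
  have hsum := sum_sInf_image_powerset hτ_inj (by simpa using hτ)
  rw [← G.sum_hgTraces_add_sum_cliqueFinset_compl _ (by simp), Fintype.card_fin,
    pow_succ] at hsum
  have hnonedges :
      2 * #(Gᶜ.cliqueFinset 2) ≤ ∑ X ∈ Gᶜ.cliqueFinset 2, sInf (τ '' X) + (n - 1) := by
    simpa using two_mul_card_le_sum_sInf
      (fun X hX => (SimpleGraph.mem_cliqueFinset_iff.1 hX).card_eq)
      (fun b => (mem_Icc.1 (hτ_mem b)).1)
      fun b hb => (mem_Icc.1 (hτ_mem b)).1.lt_of_ne' (ha ▸ hτ_inj.ne hb)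
  have hcount := Gᶜ.card_cliqueFinset_two ▸ G.card_edgeFinset_add_card_edgeFinset_compl
  rw [Fintype.card_fin] at hcount
  have := Nat.choose_lt_two_pow n 2 (by omega)
  omega
end
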